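/- The function g(t) = (4/35) t^{7/2} − t^4/12 is convex on [0,1], satisfies g(0) + g(1) − 2 g(1/2) > 0, and the ratio ( ∫_0^1 g(t) dt − g(1/2) ) / ( g(0) + g(1) − 2 g(1/2) ) is strictly greater than 1/6. Hence the bound N(1/6, 2/3) is not valid for all smooth convex functions: the best possible constant α* for which N(α*, 1−2α*) bounds the integral mean of every convex C^∞ function lies in the interval [0.18128, 1/4]. -/

import Mathlib

open MeasureTheory intervalIntegral

/-- The function `g t = (4/35) t^(7/2) - t⁴/12` from the Introduction. -/
noncomputable def g (t : ℝ) : ℝ := (4 / 35) * t ^ ((7:ℝ) / 2) - t ^ 4 / 12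

/-- Derivative of `g` on the positive reals. -/
noncomputable def gd (t : ℝ) : ℝ := (2 / 5) * t ^ ((5:ℝ) / 2) - t ^ 3 / 3

lemma hasDerivAt_g {x : ℝ} (hx : 0 < x) : HasDerivAt g (gd x) x := by
  have h1 : HasDerivAt (fun t : ℝ => t ^ ((7:ℝ)/2)) ((7:ℝ)/2 * x ^ ((7:ℝ)/2 - 1)) x :=
    Real.hasDerivAt_rpow_const (Or.inl hx.ne')
  have h2 : HasDerivAt (fun t : ℝ => t ^ 4) (4 * x ^ 3) x := by
    simpa using hasDerivAt_pow 4 x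
  have := (h1.const_mul ((4:ℝ)/35)).sub (h2.div_const 12)
  refine this.congr_deriv ?_
  unfold gd
  norm_num
  ring

lemma hasDerivAt_gd {x : ℝ} (hx : 0 < x) : HasDerivAt gd (x ^ ((3:ℝ)/2) - x ^ 2) x := by
  have h1 : HasDerivAt (fun t : ℝ => t ^ ((5:ℝ)/2)) ((5:ℝ)/2 * x ^ ((5:ℝ)/2 - 1)) x :=
    Real.hasDerivAt_rpow_const (Or.inl hx.ne')
  have h2 : HasDerivAt (fun t : ℝ => t ^ 3) (3 * x ^ 2) x := by
    simpa using hasDerivAt_pow 3 x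
  have := (h1.const_mul ((2:ℝ)/5)).sub (h2.div_const 3)
  refine this.congr_deriv ?_
  norm_num
  ring

lemma deriv_g_eq : ∀ x ∈ Set.Ioi (0:ℝ), deriv g x = gd x :=
  fun _ hx => (hasDerivAt_g hx).deriv

lemma g_convex : ConvexOn ℝ (Set.Icc 0 1) g := by
  have hint : interior (Set.Icc (0:ℝ) 1) = Set.Ioo 0 1 := interior_Icc
  apply convexOn_of_deriv2_nonneg (convex_Icc 0 1)
  · apply Continuous.continuousOn
    exact (continuous_const.mul (Real.continuous_rpow_const (by norm_num : (0:ℝ) ≤ 7/2))).sub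
      ((continuous_pow 4).div_const 12)
  · rw [hint]
    intro x hx
    exact ((hasDerivAt_g hx.1).differentiableAt).differentiableWithinAt
  · rw [hint]
    intro x hx
    have hev : deriv g =ᶠ[nhds x] gd :=
      Filter.eventuallyEq_of_mem (Ioi_mem_nhds hx.1) deriv_g_eq
    exact ((hasDerivAt_gd hx.1).differentiableAt.congr_of_eventuallyEq hev).differentiableWithinAt
  · rw [hint]
    intro x hx
    have hev : deriv g =ᶠ[nhds x] gd :=
      Filter.eventuallyEq_of_mem (Ioi_mem_nhds hx.1) deriv_g_eq
    have h2 : deriv^[2] g x = x ^ ((3:ℝ)/2) - x ^ 2 := by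
      rw [show (deriv^[2] g) = deriv (deriv g) from rfl]
      rw [hev.deriv_eq]
      exact (hasDerivAt_gd hx.1).deriv
    rw [h2]
    have : x ^ 2 ≤ x ^ ((3:ℝ)/2) := by
      have := Real.rpow_le_rpow_of_exponent_ge hx.1 hx.2.le (by norm_num : (3:ℝ)/2 ≤ 2)
      rwa [Real.rpow_two] at this
    linarith

lemma g_zero : g 0 = 0 := by
  unfold g
  rw [Real.zero_rpow (by norm_num)]
  norm_num

lemma g_one : g 1 = 4 / 35 - 1 / 12 := by
  unfold g
  rw [Real.one_rpow]
  norm_num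

lemma g_half : g (1/2) = Real.sqrt 2 / 140 - 1 / 192 := by
  unfold g
  have h2 : Real.sqrt 2 ^ 2 = 2 := Real.sq_sqrt (by norm_num)
  have h1 : ((1:ℝ)/2) ^ ((7:ℝ)/2) = (((1:ℝ)/2) ^ ((1:ℝ)/2)) ^ (7:ℕ) := by
    rw [← Real.rpow_natCast (((1:ℝ)/2) ^ ((1:ℝ)/2)) 7, ← Real.rpow_mul (by norm_num)]
    norm_num
  have hs : ((1:ℝ)/2) ^ ((1:ℝ)/2) = Real.sqrt 2 / 2 := by
    rw [← Real.sqrt_eq_rpow]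
    rw [show (1:ℝ)/2 = 2⁻¹ by norm_num, Real.sqrt_inv]
    rw [eq_div_iff (by norm_num), inv_mul_eq_div, div_eq_iff (Real.sqrt_pos.2 (by norm_num)).ne']
    nlinarith [h2]
  have h7 : Real.sqrt 2 ^ 7 = 8 * Real.sqrt 2 := by
    rw [show Real.sqrt 2 ^ 7 = (Real.sqrt 2 ^ 2) ^ 3 * Real.sqrt 2 by ring, h2]
    norm_num
  rw [h1, hs, div_pow, h7]
  norm_num
  ring

lemma g_integral : ∫ t in (0:ℝ)..1, g t = 11 / 1260 := by
  unfold g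
  have hi1 : IntervalIntegrable (fun t : ℝ => (4/35) * t ^ ((7:ℝ)/2)) volume 0 1 :=
    (continuous_const.mul (Real.continuous_rpow_const (by norm_num : (0:ℝ) ≤ 7/2))).intervalIntegrable _ _
  have hi2 : IntervalIntegrable (fun t : ℝ => t ^ 4 / 12) volume 0 1 :=
    ((continuous_pow 4).div_const 12).intervalIntegrable _ _
  rw [integral_sub hi1 hi2, intervalIntegral.integral_const_mul, intervalIntegral.integral_div,
    integral_rpow (Or.inl (by norm_num : (-1:ℝ) < 7/2)), integral_pow]
  rw [Real.one_rpow, Real.zero_rpow (by norm_num)]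
  norm_num

lemma chord {f : ℝ → ℝ} {a b : ℝ} (hab : a < b) (hc : ContinuousOn f (Set.Icc a b))
    (hf : ConvexOn ℝ (Set.Icc a b) f) :
    ∫ t in a..b, f t ≤ (b - a) * (f a + f b) / 2 := by
  have hba : 0 < b - a := by linarith
  have key : ∀ t ∈ Set.Icc a b, f t ≤ f a + (f b - f a) / (b - a) * (t - a) := by
    intro t ht
    have h1 : (0:ℝ) ≤ (b - t) / (b - a) := by
      apply div_nonneg <;> linarith [ht.2]
    have h2 : (0:ℝ) ≤ (t - a) / (b - a) := by
      apply div_nonneg <;> linarith [ht.1]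
    have h3 : (b - t) / (b - a) + (t - a) / (b - a) = 1 := by
      field_simp
      ring
    have := hf.2 (Set.left_mem_Icc.2 hab.le) (Set.right_mem_Icc.2 hab.le) h1 h2 h3
    have heq : ((b - t) / (b - a)) • a + ((t - a) / (b - a)) • b = t := by
      simp only [smul_eq_mul]
      field_simp
      ring
    rw [heq] at this
    have heq2 : ((b - t) / (b - a)) • f a + ((t - a) / (b - a)) • f b
        = f a + (f b - f a) / (b - a) * (t - a) := by
      simp only [smul_eq_mul]
      field_simp
      ring
    linarith [heq2 ▸ this]
  have hintf : IntervalIntegrable f volume a b := by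
    apply ContinuousOn.intervalIntegrable
    rwa [Set.uIcc_of_le hab.le]
  have hintl : IntervalIntegrable (fun t => f a + (f b - f a) / (b - a) * (t - a)) volume a b := by
    apply Continuous.intervalIntegrable
    fun_prop
  have hmono := intervalIntegral.integral_mono_on hab.le hintf hintl key
  have hl : ∫ t in a..b, (f a + (f b - f a) / (b - a) * (t - a)) = (b - a) * (f a + f b) / 2 := by
    have hB : IntervalIntegrable (fun t : ℝ => (f b - f a) / (b - a) * (t - a)) volume a b := by
      apply Continuous.intervalIntegrable
      fun_prop
    rw [intervalIntegral.integral_add intervalIntegrable_const hB,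
      intervalIntegral.integral_const_mul,
      intervalIntegral.integral_sub intervalIntegrable_id intervalIntegrable_const]
    simp only [integral_id, intervalIntegral.integral_const, smul_eq_mul]
    field_simp
    ring
  linarith [hl ▸ hmono]

lemma quarter_mem {a b : ℝ} (hab : a < b) {f : ℝ → ℝ}
    (hc : ContDiffOn ℝ (⊤ : ℕ∞) f (Set.Icc a b)) (hf : ConvexOn ℝ (Set.Icc a b) f) :
    (1 / (b - a)) * ∫ t in a..b, f t ≤
      (1/4 : ℝ) * (f a + f b) + (1 - 2 * (1/4)) * f ((a + b) / 2) := by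
  set m := (a + b) / 2 with hm
  have ham : a < m := by rw [hm]; linarith
  have hmb : m < b := by rw [hm]; linarith
  have hcont : ContinuousOn f (Set.Icc a b) := hc.continuousOn
  have hsub1 : Set.Icc a m ⊆ Set.Icc a b := Set.Icc_subset_Icc le_rfl hmb.le
  have hsub2 : Set.Icc m b ⊆ Set.Icc a b := Set.Icc_subset_Icc ham.le le_rfl
  have h1 := chord ham (hcont.mono hsub1) (hf.subset hsub1 (convex_Icc _ _))
  have h2 := chord hmb (hcont.mono hsub2) (hf.subset hsub2 (convex_Icc _ _))
  have hint1 : IntervalIntegrable f volume a m := by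
    apply ContinuousOn.intervalIntegrable
    rw [Set.uIcc_of_le ham.le]; exact hcont.mono hsub1
  have hint2 : IntervalIntegrable f volume m b := by
    apply ContinuousOn.intervalIntegrable
    rw [Set.uIcc_of_le hmb.le]; exact hcont.mono hsub2
  have hsplit : ∫ t in a..b, f t = (∫ t in a..m, f t) + ∫ t in m..b, f t :=
    (intervalIntegral.integral_add_adjacent_intervals hint1 hint2).symm
  have hba : (0:ℝ) < b - a := by linarith
  rw [hsplit]
  rw [div_mul_eq_mul_div, div_le_iff₀ hba]
  have hma : m - a = (b - a) / 2 := by rw [hm]; ring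
  have hbm : b - m = (b - a) / 2 := by rw [hm]; ring
  rw [hma] at h1
  rw [hbm] at h2
  nlinarith [h1, h2]

/-- The polynomial test function witnessing that the constant must be at least `29/154`. -/
noncomputable def p (t : ℝ) : ℝ := t ^ 4 / 12 - t ^ 5 / 10 + t ^ 6 / 30

lemma p_smooth : ContDiffOn ℝ (⊤ : ℕ∞) p (Set.Icc (0:ℝ) 1) := by
  apply ContDiff.contDiffOn
  unfold p
  exact (((contDiff_id.pow 4).div_const 12).sub ((contDiff_id.pow 5).div_const 10)).add
    ((contDiff_id.pow 6).div_const 30)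

lemma p_deriv : deriv p = fun t => t ^ 3 / 3 - t ^ 4 / 2 + t ^ 5 / 5 := by
  funext x
  have h : HasDerivAt p (x ^ 3 / 3 - x ^ 4 / 2 + x ^ 5 / 5) x := by
    have h4 : HasDerivAt (fun t : ℝ => t ^ 4) (4 * x ^ 3) x := by simpa using hasDerivAt_pow 4 x
    have h5 : HasDerivAt (fun t : ℝ => t ^ 5) (5 * x ^ 4) x := by simpa using hasDerivAt_pow 5 x
    have h6 : HasDerivAt (fun t : ℝ => t ^ 6) (6 * x ^ 5) x := by simpa using hasDerivAt_pow 6 x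
    have := ((h4.div_const 12).sub (h5.div_const 10)).add (h6.div_const 30)
    refine this.congr_deriv ?_
    ring
  exact h.deriv

lemma p_convex : ConvexOn ℝ (Set.Icc (0:ℝ) 1) p := by
  apply convexOn_of_deriv2_nonneg' (convex_Icc 0 1)
  · intro x _
    apply DifferentiableAt.differentiableWithinAt
    unfold p
    exact ((((differentiable_id.pow 4).div_const 12).sub
      ((differentiable_id.pow 5).div_const 10)).add
      ((differentiable_id.pow 6).div_const 30)).differentiableAt
  · rw [p_deriv]
    intro x _
    apply DifferentiableAt.differentiableWithinAt
    exact ((((differentiable_id.pow 3).div_const 3).sub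
      ((differentiable_id.pow 4).div_const 2)).add
      ((differentiable_id.pow 5).div_const 5)).differentiableAt
  · intro x _
    have h2 : deriv^[2] p x = x ^ 2 - 2 * x ^ 3 + x ^ 4 := by
      rw [show (deriv^[2] p) = deriv (deriv p) from rfl, p_deriv]
      have h3 : HasDerivAt (fun t : ℝ => t ^ 3 / 3 - t ^ 4 / 2 + t ^ 5 / 5)
          (x ^ 2 - 2 * x ^ 3 + x ^ 4) x := by
        have h3' : HasDerivAt (fun t : ℝ => t ^ 3) (3 * x ^ 2) x := by simpa using hasDerivAt_pow 3 x
        have h4 : HasDerivAt (fun t : ℝ => t ^ 4) (4 * x ^ 3) x := by simpa using hasDerivAt_pow 4 x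
        have h5 : HasDerivAt (fun t : ℝ => t ^ 5) (5 * x ^ 4) x := by simpa using hasDerivAt_pow 5 x
        have := ((h3'.div_const 3).sub (h4.div_const 2)).add (h5.div_const 5)
        refine this.congr_deriv ?_
        ring
      exact h3.deriv
    rw [h2]
    nlinarith [sq_nonneg (x - x ^ 2)]

lemma p_integral : ∫ t in (0:ℝ)..1, p t = 1 / 210 := by
  unfold p
  have h1 : IntervalIntegrable (fun t : ℝ => t ^ 4 / 12) volume 0 1 := by
    apply Continuous.intervalIntegrable; fun_prop
  have h2 : IntervalIntegrable (fun t : ℝ => t ^ 5 / 10) volume 0 1 := by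
    apply Continuous.intervalIntegrable; fun_prop
  have h3 : IntervalIntegrable (fun t : ℝ => t ^ 6 / 30) volume 0 1 := by
    apply Continuous.intervalIntegrable; fun_prop
  rw [integral_add (h1.sub h2) h3, integral_sub h1 h2,
    intervalIntegral.integral_div, intervalIntegral.integral_div,
    intervalIntegral.integral_div, integral_pow, integral_pow, integral_pow]
  norm_num

/-- **The bound `N(1/6, 2/3)` is not valid for all smooth convex functions.**
The function `g t = (4/35) t^(7/2) - t⁴/12` is convex on `[0,1]`, has
`g 0 + g 1 - 2 g (1/2) > 0`, and the ratio
`(∫_0^1 g - g(1/2)) / (g 0 + g 1 - 2 g (1/2))` exceeds `1/6`; consequently the best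
possible constant `α*` such that `(1/(b-a)) ∫_a^b f ≤ α*(f a + f b) + (1-2α*) f((a+b)/2)`
for every convex `C^∞` function lies in `[0.18128, 1/4]`. -/
theorem stmt_18 :
    ConvexOn ℝ (Set.Icc 0 1) g ∧
    0 < g 0 + g 1 - 2 * g (1 / 2) ∧
    1 / 6 < ((∫ t in (0:ℝ)..1, g t) - g (1 / 2)) /
      (g 0 + g 1 - 2 * g (1 / 2)) ∧
    sInf {α : ℝ | ∀ a b : ℝ, a < b → ∀ f : ℝ → ℝ,
        ContDiffOn ℝ (⊤ : ℕ∞) f (Set.Icc a b) → ConvexOn ℝ (Set.Icc a b) f →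
        (1 / (b - a)) * ∫ t in a..b, f t ≤
          α * (f a + f b) + (1 - 2 * α) * f ((a + b) / 2)}
      ∈ Set.Icc (0.18128 : ℝ) (1 / 4) := by
  have h2 : Real.sqrt 2 ^ 2 = 2 := Real.sq_sqrt (by norm_num)
  have hs0 : (0:ℝ) ≤ Real.sqrt 2 := Real.sqrt_nonneg 2
  have hslb : (1.41:ℝ) < Real.sqrt 2 := by nlinarith
  have hsub : Real.sqrt 2 < 1.4143 := by nlinarith
  have hden : 0 < g 0 + g 1 - 2 * g (1 / 2) := by
    rw [g_zero, g_one, g_half]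
    nlinarith
  refine ⟨g_convex, hden, ?_, ?_⟩
  · rw [lt_div_iff₀ hden, g_integral, g_zero, g_one, g_half]
    nlinarith
  · set S : Set ℝ := {α : ℝ | ∀ a b : ℝ, a < b → ∀ f : ℝ → ℝ,
        ContDiffOn ℝ (⊤ : ℕ∞) f (Set.Icc a b) → ConvexOn ℝ (Set.Icc a b) f →
        (1 / (b - a)) * ∫ t in a..b, f t ≤
          α * (f a + f b) + (1 - 2 * α) * f ((a + b) / 2)} with hS
    have hmem : (1/4 : ℝ) ∈ S := fun a b hab f hc hf => quarter_mem hab hc hf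
    have hlb : ∀ α ∈ S, (0.18128:ℝ) ≤ α := by
      intro α hα
      have h := hα 0 1 one_pos p p_smooth p_convex
      rw [p_integral] at h
      have hp0 : p 0 = 0 := by unfold p; norm_num
      have hp1 : p 1 = 1/60 := by unfold p; norm_num
      have hph : p ((0+1)/2) = 1/384 := by unfold p; norm_num
      rw [hp0, hp1, hph] at h
      norm_num at h ⊢
      linarith
    exact ⟨le_csInf ⟨1/4, hmem⟩ hlb, csInf_le ⟨0.18128, hlb⟩ hmem⟩
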